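/- arXiv:1310.3764 — 2 statements merged into one kernel-verified Lean document; each statement's English description precedes it below -/
import Mathlib

section
/- For every γ > 1/2, as λ → 2 from above one has the asymptotics G_γ(λ) = 2 B(γ − 1/2, 3/2) (λ − 2)^γ + O((λ − 2)^{γ + 1}). -/
open Filter Asymptotics

/-- `G_γ(λ) = ∫₂^λ (E² − 4)^{1/2} (λ − E)^{γ − 3/2} dE`. -/
noncomputable def Ggamma (γ lam : ℝ) : ℝ :=
  ∫ E in (2 : ℝ)..lam, Real.sqrt (E ^ 2 - 4) * (lam - E) ^ (γ - 3 / 2)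

/-- The Euler Beta function `B(x, y) = Γ(x)Γ(y)/Γ(x + y)`. -/
noncomputable def eulerBeta (x y : ℝ) : ℝ :=
  Real.Gamma x * Real.Gamma y / Real.Gamma (x + y)

/-!
Factor `√(E² − 4) = √(E + 2) · (E − 2)^{1/2}`. Replacing `√(E + 2)` by its value `2` at `E = 2`
leaves a Beta integral over `[2, λ]`, which equals `B(3/2, γ − 1/2) (λ − 2)^γ`. Since
`0 ≤ √(E + 2) − 2 ≤ (E − 2)/4`, the error is at most a quarter of the Beta integral with
`(E − 2)^{3/2}` in place of `(E − 2)^{1/2}`, namely `B(5/2, γ − 1/2) (λ − 2)^{γ + 1} / 4`.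
-/

open MeasureTheory Set

lemma eulerBeta_comm (x y : ℝ) : eulerBeta x y = eulerBeta y x := by
  rw [eulerBeta, eulerBeta, mul_comm (Real.Gamma x), add_comm]

lemma eulerBeta_pos {x y : ℝ} (hx : 0 < x) (hy : 0 < y) : 0 < eulerBeta x y :=
  ProbabilityTheory.beta_pos hx hy

lemma integral_rpow_mul_one_sub_rpow {p q : ℝ} (hp : 0 < p) (hq : 0 < q) :
    ∫ x in (0 : ℝ)..1, x ^ (p - 1) * (1 - x) ^ (q - 1) = eulerBeta p q := by
  have hcast : Complex.betaIntegral p q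
      = ((∫ x in (0 : ℝ)..1, x ^ (p - 1) * (1 - x) ^ (q - 1) : ℝ) : ℂ) := by
    rw [Complex.betaIntegral, ← intervalIntegral.integral_ofReal]
    refine intervalIntegral.integral_congr fun x hx => ?_
    rw [uIcc_of_le zero_le_one] at hx
    simp only [Complex.ofReal_mul, Complex.ofReal_cpow hx.1,
      Complex.ofReal_cpow (sub_nonneg.2 hx.2)]
    push_cast
    rfl
  rw [show eulerBeta p q = _ from ProbabilityTheory.beta_eq_betaIntegralReal p q hp hq, hcast,
    Complex.ofReal_re]

lemma intervalIntegrable_sub_rpow_mul_sub_rpow {a b r s : ℝ} (hr : -1 < r) (hs : -1 < s)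
    (hab : a < b) :
    IntervalIntegrable (fun x => (x - a) ^ r * (b - x) ^ s) volume a b := by
  obtain ⟨m, ham, hmb⟩ := exists_between hab
  have left : IntervalIntegrable (fun x => (x - a) ^ r) volume a m := by
    simpa using
      (intervalIntegral.intervalIntegrable_rpow' (a := 0) (b := m - a) hr).comp_sub_right a
  have right : IntervalIntegrable (fun x => (b - x) ^ s) volume m b := by
    simpa using
      ((intervalIntegral.intervalIntegrable_rpow' (a := 0) (b := b - m) hs).comp_sub_left b).symm
  refine (left.mul_continuousOn ?_).trans (right.continuousOn_mul ?_)
  · refine ContinuousOn.rpow_const (by fun_prop) fun x hx => Or.inl ?_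
    rw [uIcc_of_le ham.le] at hx
    exact (sub_pos.2 (hx.2.trans_lt hmb)).ne'
  · refine ContinuousOn.rpow_const (by fun_prop) fun x hx => Or.inl ?_
    rw [uIcc_of_le hmb.le] at hx
    exact (sub_pos.2 (ham.trans_le hx.1)).ne'

lemma integral_sub_rpow_mul_sub_rpow {a b r s : ℝ} (hr : -1 < r) (hs : -1 < s) (hab : a < b) :
    ∫ x in a..b, (x - a) ^ r * (b - x) ^ s
      = (b - a) ^ (r + s + 1) * eulerBeta (r + 1) (s + 1) := by
  have hba : 0 < b - a := sub_pos.2 hab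
  have hsubst := intervalIntegral.smul_integral_comp_add_mul
    (fun x => (x - a) ^ r * (b - x) ^ s) (b - a) a (a := 0) (b := 1)
  rw [mul_zero, mul_one, add_zero, add_sub_cancel, smul_eq_mul] at hsubst
  have hscale : ∫ t in (0 : ℝ)..1, (a + (b - a) * t - a) ^ r * (b - (a + (b - a) * t)) ^ s
      = (b - a) ^ r * (b - a) ^ s * eulerBeta (r + 1) (s + 1) := by
    rw [← integral_rpow_mul_one_sub_rpow (by linarith) (by linarith), add_sub_cancel_right,
      add_sub_cancel_right, ← intervalIntegral.integral_const_mul]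
    refine intervalIntegral.integral_congr fun t ht => ?_
    rw [uIcc_of_le zero_le_one] at ht
    simp only [add_sub_cancel_left, show b - (a + (b - a) * t) = (b - a) * (1 - t) by ring,
      Real.mul_rpow hba.le ht.1, Real.mul_rpow hba.le (sub_nonneg.2 ht.2)]
    ring
  rw [← hsubst, hscale, Real.rpow_add hba, Real.rpow_add hba, Real.rpow_one]
  ring

lemma sqrt_add_two_sub_two_mem_Icc {E : ℝ} (hE : 2 ≤ E) :
    Real.sqrt (E + 2) - 2 ∈ Icc 0 ((E - 2) / 4) := by
  constructor
  · rw [sub_nonneg, Real.le_sqrt zero_le_two (by linarith)]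
    linarith
  · rw [sub_le_iff_le_add, Real.sqrt_le_iff]
    constructor <;> nlinarith

section Ggamma

variable {γ lam : ℝ}

lemma Ggamma_eq_integral (hlam : 2 ≤ lam) :
    Ggamma γ lam = ∫ E in (2 : ℝ)..lam,
      Real.sqrt (E + 2) * ((E - 2) ^ (1 / 2 : ℝ) * (lam - E) ^ (γ - 3 / 2)) := by
  refine intervalIntegral.integral_congr fun E hE => ?_
  rw [uIcc_of_le hlam] at hE
  rw [show E ^ 2 - 4 = (E - 2) * (E + 2) by ring, Real.sqrt_mul (by linarith [hE.1]),
    Real.sqrt_eq_rpow (E - 2)]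
  ring

lemma Ggamma_sub_eq_integral (hγ : 1 / 2 < γ) (hlam : 2 < lam) :
    Ggamma γ lam - 2 * eulerBeta (γ - 1 / 2) (3 / 2) * (lam - 2) ^ γ
      = ∫ E in (2 : ℝ)..lam,
        (Real.sqrt (E + 2) - 2) * ((E - 2) ^ (1 / 2 : ℝ) * (lam - E) ^ (γ - 3 / 2)) := by
  have hkernel := intervalIntegrable_sub_rpow_mul_sub_rpow
    (show (-1 : ℝ) < 1 / 2 by norm_num) (show -1 < γ - 3 / 2 by linarith) hlam
  have hbeta := integral_sub_rpow_mul_sub_rpow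
    (show (-1 : ℝ) < 1 / 2 by norm_num) (show -1 < γ - 3 / 2 by linarith) hlam
  rw [show (1 / 2 : ℝ) + (γ - 3 / 2) + 1 = γ by ring, show γ - 3 / 2 + 1 = γ - 1 / 2 by ring,
    show (1 / 2 : ℝ) + 1 = 3 / 2 by norm_num, eulerBeta_comm] at hbeta
  simp_rw [sub_mul]
  rw [intervalIntegral.integral_sub (hkernel.continuousOn_mul (by fun_prop))
    (hkernel.const_mul 2), intervalIntegral.integral_const_mul, hbeta, Ggamma_eq_integral hlam.le]
  ring

lemma abs_Ggamma_sub_le (hγ : 1 / 2 < γ) (hlam : 2 < lam) :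
    |Ggamma γ lam - 2 * eulerBeta (γ - 1 / 2) (3 / 2) * (lam - 2) ^ γ|
      ≤ eulerBeta (5 / 2) (γ - 1 / 2) / 4 * (lam - 2) ^ (γ + 1) := by
  have hbound : ∀ E ∈ Ioc 2 lam,
      ‖(Real.sqrt (E + 2) - 2) * ((E - 2) ^ (1 / 2 : ℝ) * (lam - E) ^ (γ - 3 / 2))‖
        ≤ 1 / 4 * ((E - 2) ^ (3 / 2 : ℝ) * (lam - E) ^ (γ - 3 / 2)) := by
    intro E ⟨h2E, hElam⟩
    obtain ⟨hlow, hup⟩ := sqrt_add_two_sub_two_mem_Icc h2E.le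
    have hE2 : 0 < E - 2 := sub_pos.2 h2E
    have hkernel : 0 ≤ (E - 2) ^ (1 / 2 : ℝ) * (lam - E) ^ (γ - 3 / 2) :=
      mul_nonneg (Real.rpow_nonneg hE2.le _) (Real.rpow_nonneg (sub_nonneg.2 hElam) _)
    have hpow : (E - 2) ^ (3 / 2 : ℝ) = (E - 2) * (E - 2) ^ (1 / 2 : ℝ) := by
      rw [← Real.rpow_one_add' hE2.le (by norm_num)]
      norm_num
    rw [Real.norm_eq_abs, abs_of_nonneg (mul_nonneg hlow hkernel), hpow]
    calc _ ≤ (E - 2) / 4 * ((E - 2) ^ (1 / 2 : ℝ) * (lam - E) ^ (γ - 3 / 2)) :=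
          mul_le_mul_of_nonneg_right hup hkernel
      _ = _ := by ring
  have hbeta := integral_sub_rpow_mul_sub_rpow
    (show (-1 : ℝ) < 3 / 2 by norm_num) (show -1 < γ - 3 / 2 by linarith) hlam
  rw [show (3 / 2 : ℝ) + (γ - 3 / 2) + 1 = γ + 1 by ring, show γ - 3 / 2 + 1 = γ - 1 / 2 by ring,
    show (3 / 2 : ℝ) + 1 = 5 / 2 by norm_num] at hbeta
  rw [Ggamma_sub_eq_integral hγ hlam, ← Real.norm_eq_abs]
  calc _ ≤ |∫ E in (2 : ℝ)..lam, 1 / 4 * ((E - 2) ^ (3 / 2 : ℝ) * (lam - E) ^ (γ - 3 / 2))| :=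
        intervalIntegral.norm_integral_le_abs_of_norm_le
          (by rw [uIoc_of_le hlam.le]; exact ae_restrict_of_forall_mem measurableSet_Ioc hbound)
          ((intervalIntegrable_sub_rpow_mul_sub_rpow (by norm_num) (by linarith) hlam).const_mul _)
    _ = _ := by
        have hB := eulerBeta_pos (show (0 : ℝ) < 5 / 2 by norm_num) (show 0 < γ - 1 / 2 by linarith)
        rw [intervalIntegral.integral_const_mul, hbeta, abs_of_nonneg (by positivity)]
        ring

end Ggamma

/-- For every `γ > 1/2`, as `λ → 2⁺`,
`G_γ(λ) = 2 B(γ − 1/2, 3/2) (λ − 2)^γ + O((λ − 2)^{γ + 1})`. -/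
theorem Ggamma_asymptotics_at_two (γ : ℝ) (hγ : 1 / 2 < γ) :
    (fun lam : ℝ =>
        Ggamma γ lam - 2 * eulerBeta (γ - 1 / 2) (3 / 2) * (lam - 2) ^ γ)
      =O[nhdsWithin 2 (Set.Ioi 2)] (fun lam : ℝ => (lam - 2) ^ (γ + 1)) := by
  refine IsBigO.of_bound (eulerBeta (5 / 2) (γ - 1 / 2) / 4) ?_
  filter_upwards [self_mem_nhdsWithin] with lam (hlam : 2 < lam)
  rw [Real.norm_eq_abs, Real.norm_of_nonneg (Real.rpow_nonneg (sub_nonneg.2 hlam.le) _)]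
  exact abs_Ggamma_sub_le hγ hlam
end

section
/- Let ω > 0, let c_n = cosh(ωn) for n ∈ ℤ, and define a₁(n) = −√(c_n c_{n+2}) / c_{n+1} and b₁(n) = c_n/c_{n+1} − c_{n−1}/c_n. Then Σ_{n∈ℤ} b₁(n)² + 2 Σ_{n∈ℤ} (a₁(n)² − 1 − log(a₁(n)²)) = e^{2ω} − e^{−2ω} − 4ω. (In particular, with k₁ = e^{ω} this is equality in the inequality Σ_j (k_j² − 1/k_j² − log(k_j⁴)) ≤ Σ b(n)² + 2Σ(a(n)² − 1 − log a(n)²) for the reflectionless Jacobi operator with these coefficients, whose unique eigenvalue outside [−2,2] is λ₁ = −2cosh(ω).) -/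
/-!
Write `S = sinh ω`, `C = cosh ω` and `Tₙ = tanh (ω n)`. The addition formulas give
`c_{n±1} / cₙ = C ± S Tₙ`, hence `b₁(n) = S (Tₙ - Tₙ₊₁)`, `a₁(n)² = C² - S² Tₙ₊₁²` and
`log a₁(n)² = log (C + S Tₙ₊₁) - log (C + S Tₙ)`. Together with `C (Tₙ₊₁ - Tₙ) = S (1 - Tₙ Tₙ₊₁)`
this makes the nonnegative summand `b₁(n)² + 2 (a₁(n)² - 1 - log a₁(n)²)` the increment
`Ψ(Tₙ₊₁) - Ψ(Tₙ)` of `Ψ(T) = 2 S C T - S² T² - 2 log (C + S T)`. As `Tₙ → ±1` for `n → ±∞` and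
`C ± S = e^{±ω}`, the series telescopes to `Ψ(1) - Ψ(-1) = 4 S C - 4 ω = e^{2ω} - e^{-2ω} - 4ω`.
-/

open Real Filter Topology Finset

theorem hasSum_int_of_nonneg_of_eq_sub {f g : ℤ → ℝ} {a b : ℝ} (hf : ∀ n, 0 ≤ f n)
    (hfg : ∀ n, f n = g (n + 1) - g n) (hbot : Tendsto g atBot (𝓝 a))
    (htop : Tendsto g atTop (𝓝 b)) : HasSum f (b - a) := by
  have hnat : HasSum (fun n : ℕ => f n) (b - g 0) := by
    rw [hasSum_iff_tendsto_nat_of_nonneg (fun n => hf n)]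
    have hpartial (N : ℕ) : ∑ i ∈ range N, f i = g N - g 0 := by
      simpa [hfg] using Finset.sum_range_sub (fun i : ℕ => g i) N
    simpa only [hpartial, Function.comp_def] using
      (htop.comp tendsto_natCast_atTop_atTop).sub_const (g 0)
  have hneg : HasSum (fun n : ℕ => f (-(n + 1))) (g 0 - a) := by
    rw [hasSum_iff_tendsto_nat_of_nonneg (fun n => hf _)]
    have hpartial (N : ℕ) : ∑ i ∈ range N, f (-(i + 1)) = g 0 - g (-N) := by
      simpa [hfg, neg_add] using Finset.sum_range_sub' (fun i : ℕ => g (-i)) N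
    simpa only [hpartial, Function.comp_def] using
      (hbot.comp (tendsto_neg_atTop_atBot.comp tendsto_natCast_atTop_atTop)).const_sub (g 0)
  simpa using hnat.of_nat_of_neg_add_one hneg

theorem Real.tendsto_tanh_atTop : Tendsto tanh atTop (𝓝 1) := by
  have htanh (x : ℝ) : tanh x = (1 - exp (-(2 * x))) / (1 + exp (-(2 * x))) := by
    rw [tanh_eq, show -(2 * x) = -x + -x by ring, exp_add]
    have hx : exp x * exp (-x) = 1 := by rw [← exp_add, add_neg_cancel, exp_zero]
    field_simp
    linear_combination 2 * exp (-x) * hx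
  have hexp : Tendsto (fun x => exp (-(2 * x))) atTop (𝓝 0) :=
    tendsto_exp_neg_atTop_nhds_zero.comp (tendsto_id.const_mul_atTop two_pos)
  have : Tendsto (fun x => (1 - exp (-(2 * x))) / (1 + exp (-(2 * x)))) atTop
      (𝓝 ((1 - 0) / (1 + 0))) :=
    (tendsto_const_nhds.sub hexp).div (tendsto_const_nhds.add hexp) (by norm_num)
  simpa [← htanh] using this

theorem Real.tendsto_tanh_atBot : Tendsto tanh atBot (𝓝 (-1)) := by
  simpa [Function.comp_def] using tendsto_tanh_atTop.neg.comp tendsto_neg_atBot_atTop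

theorem Real.cosh_add_div_cosh (x y : ℝ) : cosh (x + y) / cosh x = cosh y + sinh y * tanh x := by
  rw [cosh_add, tanh_eq_sinh_div_cosh]
  field_simp

theorem Real.cosh_sub_div_cosh (x y : ℝ) : cosh (x - y) / cosh x = cosh y - sinh y * tanh x := by
  rw [cosh_sub, tanh_eq_sinh_div_cosh]
  field_simp

theorem Real.cosh_mul_tanh_add_sub_tanh (x y : ℝ) :
    cosh y * (tanh (x + y) - tanh x) = sinh y * (1 - tanh x * tanh (x + y)) := by
  obtain ⟨z, rfl⟩ : ∃ z, y = z - x := ⟨x + y, by ring⟩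
  rw [add_sub_cancel, tanh_eq_sinh_div_cosh, tanh_eq_sinh_div_cosh, cosh_sub, sinh_sub]
  field_simp

noncomputable section

namespace ReflectionlessJacobi

variable (ω x : ℝ)

/-- At `x = ω n` these are `a₁(n)²` and `b₁(n)`. -/
def aSq : ℝ := cosh x * cosh (x + 2 * ω) / cosh (x + ω) ^ 2

def b : ℝ := cosh x / cosh (x + ω) - cosh (x - ω) / cosh x

def potential (T : ℝ) : ℝ :=
  2 * sinh ω * cosh ω * T - sinh ω ^ 2 * T ^ 2 - 2 * log (cosh ω + sinh ω * T)

theorem b_eq : b ω x = sinh ω * (tanh x - tanh (x + ω)) := by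
  have h := cosh_sub_div_cosh (x + ω) ω
  rw [add_sub_cancel_right] at h
  rw [b, h, cosh_sub_div_cosh]
  ring

theorem aSq_eq : aSq ω x = cosh ω ^ 2 - sinh ω ^ 2 * tanh (x + ω) ^ 2 := by
  have h : aSq ω x = cosh (x + ω + ω) / cosh (x + ω) * (cosh (x + ω - ω) / cosh (x + ω)) := by
    rw [aSq, add_sub_cancel_right, add_assoc, ← two_mul]
    ring
  rw [h, cosh_add_div_cosh, cosh_sub_div_cosh]
  ring

theorem log_aSq : log (aSq ω x) =
    log (cosh ω + sinh ω * tanh (x + ω)) - log (cosh ω + sinh ω * tanh x) := by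
  have h : aSq ω x = cosh (x + ω + ω) / cosh (x + ω) / (cosh (x + ω) / cosh x) := by
    rw [aSq, add_assoc, ← two_mul]
    field_simp
  rw [h, log_div (by positivity) (by positivity), cosh_add_div_cosh, cosh_add_div_cosh]

theorem b_sq_add_two_mul_eq_potential_sub :
    b ω x ^ 2 + 2 * (aSq ω x - 1 - log (aSq ω x)) =
      potential ω (tanh (x + ω)) - potential ω (tanh x) := by
  rw [log_aSq, b_eq, aSq_eq, potential, potential]
  linear_combination (-2 * sinh ω) * cosh_mul_tanh_add_sub_tanh x ω + 2 * cosh_sq_sub_sinh_sq ω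

theorem aSq_sub_one_sub_log_nonneg : 0 ≤ aSq ω x - 1 - log (aSq ω x) := by
  have := log_le_sub_one_of_pos (show 0 < aSq ω x by unfold aSq; positivity)
  linarith

theorem potential_one_sub_potential_neg_one :
    potential ω 1 - potential ω (-1) = exp (2 * ω) - exp (-(2 * ω)) - 4 * ω := by
  have h1 : cosh ω + sinh ω * 1 = exp ω := by rw [mul_one, cosh_add_sinh]
  have h2 : cosh ω + sinh ω * (-1) = exp (-ω) := by
    rw [mul_neg_one, ← sub_eq_add_neg, cosh_sub_sinh]
  have h3 : exp (2 * ω) - exp (-(2 * ω)) = 4 * sinh ω * cosh ω := by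
    linear_combination (-2) * sinh_eq (2 * ω) + 2 * sinh_two_mul ω
  rw [potential, potential, h1, h2, log_exp, log_exp, h3]
  ring

theorem continuousAt_potential {T : ℝ} (hT : cosh ω + sinh ω * T ≠ 0) :
    ContinuousAt (potential ω) T := by
  unfold potential
  fun_prop (disch := exact hT)

theorem hasSum_b_sq_add_two_mul (hω : 0 < ω) :
    HasSum (fun n : ℤ => b ω (ω * n) ^ 2 + 2 * (aSq ω (ω * n) - 1 - log (aSq ω (ω * n))))
      (exp (2 * ω) - exp (-(2 * ω)) - 4 * ω) := by
  have hpos : cosh ω + sinh ω * 1 ≠ 0 := by rw [mul_one, cosh_add_sinh]; positivity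
  have hneg : cosh ω + sinh ω * (-1) ≠ 0 := by
    rw [mul_neg_one, ← sub_eq_add_neg, cosh_sub_sinh]; positivity
  rw [← potential_one_sub_potential_neg_one]
  refine hasSum_int_of_nonneg_of_eq_sub (g := fun n : ℤ => potential ω (tanh (ω * n)))
    (fun n => by have := aSq_sub_one_sub_log_nonneg ω (ω * n); positivity) (fun n => ?_) ?_ ?_
  · rw [b_sq_add_two_mul_eq_potential_sub, Int.cast_add, Int.cast_one, mul_add_one]
  · exact (continuousAt_potential ω hneg).tendsto.comp <| tendsto_tanh_atBot.comp <|
      (tendsto_intCast_atBot_iff.2 tendsto_id).const_mul_atBot hω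
  · exact (continuousAt_potential ω hpos).tendsto.comp <| tendsto_tanh_atTop.comp <|
      tendsto_intCast_atTop_atTop.const_mul_atTop hω

end ReflectionlessJacobi

end

open ReflectionlessJacobi in
/-- With `c_n = cosh(ωn)`, `a₁(n) = −√(c_n c_{n+2})/c_{n+1}` and
`b₁(n) = c_n/c_{n+1} − c_{n−1}/c_n` (the reflectionless Jacobi operator of
Spiridonov–Zhedanov), both series converge and
`Σ b₁(n)² + 2 Σ (a₁(n)² − 1 − log a₁(n)²) = e^{2ω} − e^{−2ω} − 4ω`;
i.e. equality holds in the sharp spectral inequality for this operator. -/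
theorem reflectionless_equality (ω : ℝ) (hω : 0 < ω)
    (c : ℤ → ℝ) (hc : ∀ n : ℤ, c n = Real.cosh (ω * n))
    (a1 : ℤ → ℝ) (ha1 : ∀ n : ℤ, a1 n = -Real.sqrt (c n * c (n + 2)) / c (n + 1))
    (b1 : ℤ → ℝ) (hb1 : ∀ n : ℤ, b1 n = c n / c (n + 1) - c (n - 1) / c n) :
    Summable (fun n : ℤ => (b1 n) ^ 2)
    ∧ Summable (fun n : ℤ => (a1 n) ^ 2 - 1 - Real.log ((a1 n) ^ 2))
    ∧ (∑' n : ℤ, (b1 n) ^ 2)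
        + 2 * ∑' n : ℤ, ((a1 n) ^ 2 - 1 - Real.log ((a1 n) ^ 2))
      = Real.exp (2 * ω) - Real.exp (-(2 * ω)) - 4 * ω := by
  have ha : ∀ n : ℤ, a1 n ^ 2 = aSq ω (ω * n) := fun n => by
    rw [ha1, hc, hc, hc, div_pow, neg_sq, sq_sqrt (by positivity), aSq]
    push_cast
    ring_nf
  have hb : ∀ n : ℤ, b1 n = b ω (ω * n) := fun n => by
    rw [hb1, hc, hc, hc, b]
    push_cast
    ring_nf
  simp only [ha, hb]
  have hsum := hasSum_b_sq_add_two_mul ω hω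
  have hb_summable : Summable fun n : ℤ => b ω (ω * n) ^ 2 :=
    hsum.summable.of_nonneg_of_le (fun n => sq_nonneg _) fun n =>
      le_add_of_nonneg_right (mul_nonneg zero_le_two (aSq_sub_one_sub_log_nonneg ω _))
  have ha_summable : Summable fun n : ℤ => aSq ω (ω * n) - 1 - log (aSq ω (ω * n)) :=
    (summable_mul_left_iff two_ne_zero).1 <| (hsum.summable.sub hb_summable).congr fun n => by ring
  refine ⟨hb_summable, ha_summable, ?_⟩
  rw [← tsum_mul_left, ← hb_summable.tsum_add (ha_summable.mul_left 2), hsum.tsum_eq]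
end
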